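/- Cumulative incidence of the terminal event without a preceding intermediate event in the latent-time construction: for every t ≥ 0, P(T₂ ≤ t and D₀ ≤ T₁) = ∫₀ᵗ exp{−Λ₀(s) − Λ⋆(s)} λ₀(s) ds. -/

import Mathlib

open MeasureTheory ProbabilityTheory Filter Set

/-- Cumulative hazard `Λ(t) = ∫₀ᵗ λ(u) du`. -/
noncomputable def cumHaz (lam : ℝ → ℝ) (t : ℝ) : ℝ := ∫ u in (0:ℝ)..t, lam u

/-- Post-intermediate cumulative hazard `Λ₁(t,s) = ∫ₛᵗ λ₁(u,s) du`. -/
noncomputable def cumHaz1 (lam1 : ℝ → ℝ → ℝ) (t s : ℝ) : ℝ := ∫ u in s..t, lam1 u s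

/-- The counterfactual cumulative incidence function
`F(t) = ∫₀ᵗ e^{−Λ₀(s)−Λ⋆(s)} λ₀(s) ds + ∫₀ᵗ e^{−Λ₀(s)−Λ⋆(s)} λ⋆(s) (1 − e^{−Λ₁(t,s)}) ds`. -/
noncomputable def cif (lamS lam0 : ℝ → ℝ) (lam1 : ℝ → ℝ → ℝ) (t : ℝ) : ℝ :=
  (∫ s in (0:ℝ)..t, Real.exp (-cumHaz lam0 s - cumHaz lamS s) * lam0 s) +
  ∫ s in (0:ℝ)..t, Real.exp (-cumHaz lam0 s - cumHaz lamS s) * lamS s *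
    (1 - Real.exp (-cumHaz1 lam1 t s))

/-!
On `{D₀ ≤ T₁}` the construction gives `T₂ = D₀`, so the event is `{D₀ ≤ t, D₀ ≤ T₁}`.
Since `Λ₀` and `Λ⋆` are strictly increasing, `D₀` and `T₁` generate sub-σ-algebras of those of the
independent `E₂` and `E₁`, so they are independent; moreover `{D₀ ≤ a} = {E₂ ≤ Λ₀ a}`, so `D₀` has
distribution function `1 - exp (-Λ₀)`, i.e. density `exp (-Λ₀) λ₀` on `[0, ∞)`, and likewise
`P(T₁ ≥ s) = exp (-Λ⋆ s)`. Fubini for the product law of `(D₀, T₁)` then gives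
`∫₀ᵗ exp (-Λ₀ s) λ₀ s · exp (-Λ⋆ s) ds`.
-/

section CumulativeHazard

variable {lam : ℝ → ℝ}

lemma cumHaz_zero (lam : ℝ → ℝ) : cumHaz lam 0 = 0 := intervalIntegral.integral_same

lemma ContinuousOn.intervalIntegrable_of_Ici (hc : ContinuousOn lam (Ici 0)) {a b : ℝ}
    (ha : 0 ≤ a) (hb : 0 ≤ b) : IntervalIntegrable lam volume a b :=
  (hc.mono fun _ hx ↦ (le_min ha hb).trans hx.1).intervalIntegrable

lemma cumHaz_strictMonoOn (hc : ContinuousOn lam (Ici 0)) (hpos : ∀ t ∈ Ici (0:ℝ), 0 < lam t) :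
    StrictMonoOn (cumHaz lam) (Ici 0) := by
  intro a ha b hb hab
  have hpos_ab : 0 < ∫ u in a..b, lam u :=
    intervalIntegral.intervalIntegral_pos_of_pos_on (hc.intervalIntegrable_of_Ici ha hb)
      (fun x hx ↦ hpos x (ha.trans hx.1.le)) hab
  have hsplit : cumHaz lam a + ∫ u in a..b, lam u = cumHaz lam b :=
    intervalIntegral.integral_add_adjacent_intervals (hc.intervalIntegrable_of_Ici le_rfl ha)
      (hc.intervalIntegrable_of_Ici ha hb)
  linarith

lemma cumHaz_nonneg (hc : ContinuousOn lam (Ici 0)) (hpos : ∀ t ∈ Ici (0:ℝ), 0 < lam t)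
    {t : ℝ} (ht : 0 ≤ t) : 0 ≤ cumHaz lam t :=
  cumHaz_zero lam ▸ (cumHaz_strictMonoOn hc hpos).monotoneOn self_mem_Ici ht ht

lemma cumHaz_continuousOn_Icc (hc : ContinuousOn lam (Ici 0)) {a : ℝ} (ha : 0 ≤ a) :
    ContinuousOn (cumHaz lam) (Icc 0 a) := by
  rw [← uIcc_of_le ha]
  exact intervalIntegral.continuousOn_primitive_interval
    ((hc.mono (uIcc_of_le ha ▸ Icc_subset_Ici_self)).integrableOn_compact isCompact_uIcc)

lemma cumHaz_hasDerivAt (hc : ContinuousOn lam (Ici 0)) {x : ℝ} (hx : 0 < x) :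
    HasDerivAt (cumHaz lam) (lam x) x :=
  intervalIntegral.integral_hasDerivAt_right (hc.intervalIntegrable_of_Ici le_rfl hx.le)
    ((hc.mono Ioi_subset_Ici_self).stronglyMeasurableAtFilter isOpen_Ioi x hx)
    ((hc.mono Ioi_subset_Ici_self).continuousAt (Ioi_mem_nhds hx))

lemma continuousOn_exp_neg_cumHaz_mul (hc : ContinuousOn lam (Ici 0)) {a : ℝ} (ha : 0 ≤ a) :
    ContinuousOn (fun s ↦ Real.exp (-cumHaz lam s) * lam s) (Icc 0 a) :=
  (cumHaz_continuousOn_Icc hc ha).neg.rexp.mul (hc.mono Icc_subset_Ici_self)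

lemma integral_exp_neg_cumHaz_mul (hc : ContinuousOn lam (Ici 0)) {a : ℝ} (ha : 0 ≤ a) :
    ∫ s in (0:ℝ)..a, Real.exp (-cumHaz lam s) * lam s = 1 - Real.exp (-cumHaz lam a) := by
  have hprim := intervalIntegral.integral_eq_sub_of_hasDeriv_right_of_le ha
    (f := fun s ↦ -Real.exp (-cumHaz lam s)) (f' := fun s ↦ Real.exp (-cumHaz lam s) * lam s)
    ((cumHaz_continuousOn_Icc hc ha).neg.rexp.neg)
    (fun x hx ↦ by
      convert ((cumHaz_hasDerivAt hc hx.1).neg.exp.neg).hasDerivWithinAt using 1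
      · rfl
      · simp)
    ((continuousOn_exp_neg_cumHaz_mul hc ha).intervalIntegrable_of_Icc ha)
  rw [hprim, cumHaz_zero]
  simp only [neg_zero, Real.exp_zero]
  ring

end CumulativeHazard

lemma lintegral_Icc_ofReal_eq_ofReal_integral {f : ℝ → ℝ} {a : ℝ} (ha : 0 ≤ a)
    (hc : ContinuousOn f (Icc 0 a)) (hnn : ∀ x ∈ Icc 0 a, 0 ≤ f x) :
    ∫⁻ x in Icc 0 a, ENNReal.ofReal (f x) = ENNReal.ofReal (∫ x in (0:ℝ)..a, f x) := by
  rw [intervalIntegral.integral_of_le ha, ← integral_Icc_eq_integral_Ioc,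
    ofReal_integral_eq_lintegral_ofReal (hc.integrableOn_compact isCompact_Icc)
      (ae_restrict_of_forall_mem measurableSet_Icc hnn)]

lemma expMeasure_one_Iic {a : ℝ} (ha : 0 ≤ a) :
    expMeasure 1 (Iic a) = ENNReal.ofReal (1 - Real.exp (-a)) := by
  rw [expMeasure, gammaMeasure, withDensity_apply _ measurableSet_Iic]
  exact (lintegral_exponentialPDF_eq_antiDeriv one_pos a).trans (by rw [if_pos ha, one_mul])

lemma expMeasure_one_Ici {a : ℝ} (ha : 0 ≤ a) :
    expMeasure 1 (Ici a) = ENNReal.ofReal (Real.exp (-a)) := by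
  have := isProbabilityMeasure_expMeasure one_pos
  have hIio : expMeasure 1 (Iio a) = expMeasure 1 (Iic a) := by
    rw [expMeasure, gammaMeasure, withDensity_apply _ measurableSet_Iio,
      withDensity_apply _ measurableSet_Iic]
    exact setLIntegral_congr Iio_ae_eq_Iic
  rw [← compl_Iio, prob_compl_eq_one_sub measurableSet_Iio, hIio, expMeasure_one_Iic ha,
    ← ENNReal.ofReal_one,
    ← ENNReal.ofReal_sub _ (by linarith [Real.exp_le_one_iff.2 (neg_nonpos.2 ha)])]
  ring_nf

section LatentTime

variable {Ω : Type*} {F : ℝ → ℝ} {E D : Ω → ℝ}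

lemma preimage_Iic_of_latent (hF : StrictMonoOn F (Ici 0)) (hD : ∀ ω, 0 ≤ D ω ∧ F (D ω) = E ω)
    {a : ℝ} (ha : 0 ≤ a) : D ⁻¹' Iic a = E ⁻¹' Iic (F a) := by
  ext ω
  simp only [mem_preimage, mem_Iic, ← (hD ω).2]
  exact (hF.le_iff_le (hD ω).1 ha).symm

lemma preimage_Iic_of_latent_of_neg (hD : ∀ ω, 0 ≤ D ω) {a : ℝ} (ha : a < 0) :
    D ⁻¹' Iic a = ∅ :=
  eq_empty_of_forall_notMem fun ω hω ↦ (hD ω).not_gt (lt_of_le_of_lt hω ha)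

lemma preimage_Ici_of_latent (hF : StrictMonoOn F (Ici 0)) (hD : ∀ ω, 0 ≤ D ω ∧ F (D ω) = E ω)
    {a : ℝ} (ha : 0 ≤ a) : D ⁻¹' Ici a = E ⁻¹' Ici (F a) := by
  ext ω
  simp only [mem_preimage, mem_Ici, ← (hD ω).2]
  exact (hF.le_iff_le ha (hD ω).1).symm

lemma comap_le_comap_of_latent [MeasurableSpace Ω] (hF : StrictMonoOn F (Ici 0))
    (hD : ∀ ω, 0 ≤ D ω ∧ F (D ω) = E ω) :
    MeasurableSpace.comap D inferInstance ≤ MeasurableSpace.comap E inferInstance := by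
  refine Measurable.comap_le (measurable_of_Iic (mδ := MeasurableSpace.comap E _) fun a ↦ ?_)
  rcases le_or_gt 0 a with ha | ha
  · rw [preimage_Iic_of_latent hF hD ha]
    exact ⟨Iic (F a), measurableSet_Iic, rfl⟩
  · rw [preimage_Iic_of_latent_of_neg (fun ω ↦ (hD ω).1) ha]
    exact MeasurableSpace.measurableSet_empty _

lemma measurable_of_latent [MeasurableSpace Ω] (hF : StrictMonoOn F (Ici 0))
    (hD : ∀ ω, 0 ≤ D ω ∧ F (D ω) = E ω) (hE : Measurable E) : Measurable D :=
  measurable_iff_comap_le.2 ((comap_le_comap_of_latent hF hD).trans hE.comap_le)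

lemma indepFun_of_latent [MeasurableSpace Ω] {P : Measure Ω} {G : ℝ → ℝ} {E' T : Ω → ℝ}
    (hF : StrictMonoOn F (Ici 0)) (hD : ∀ ω, 0 ≤ D ω ∧ F (D ω) = E ω)
    (hG : StrictMonoOn G (Ici 0)) (hT : ∀ ω, 0 ≤ T ω ∧ G (T ω) = E' ω)
    (hindep : IndepFun E E' P) : IndepFun D T P := by
  rw [IndepFun_iff_Indep] at hindep ⊢
  exact indep_of_indep_of_le_right (indep_of_indep_of_le_left hindep
    (comap_le_comap_of_latent hF hD)) (comap_le_comap_of_latent hG hT)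

end LatentTime

/-- `D = Λ⁻¹(E)` is the latent time with hazard `lam` generated by a unit exponential `E`. -/
structure IsLatentTime {Ω : Type*} [MeasurableSpace Ω] (P : Measure Ω) (lam : ℝ → ℝ)
    (E D : Ω → ℝ) : Prop where
  continuousOn : ContinuousOn lam (Ici 0)
  pos : ∀ t ∈ Ici (0:ℝ), 0 < lam t
  measurable_driver : Measurable E
  map_driver : P.map E = expMeasure 1
  spec : ∀ ω, 0 ≤ D ω ∧ cumHaz lam (D ω) = E ω

namespace IsLatentTime

variable {Ω : Type*} [MeasurableSpace Ω] {P : Measure Ω} {lam : ℝ → ℝ} {E D : Ω → ℝ}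

lemma measurable (hD : IsLatentTime P lam E D) : Measurable D :=
  measurable_of_latent (cumHaz_strictMonoOn hD.continuousOn hD.pos) hD.spec hD.measurable_driver

lemma indepFun {mu : ℝ → ℝ} {E' T : Ω → ℝ} (hD : IsLatentTime P lam E D)
    (hT : IsLatentTime P mu E' T) (hindep : IndepFun E E' P) : IndepFun D T P :=
  indepFun_of_latent (cumHaz_strictMonoOn hD.continuousOn hD.pos) hD.spec
    (cumHaz_strictMonoOn hT.continuousOn hT.pos) hT.spec hindep

lemma map_Iic (hD : IsLatentTime P lam E D) {a : ℝ} (ha : 0 ≤ a) :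
    P.map D (Iic a) = ENNReal.ofReal (1 - Real.exp (-cumHaz lam a)) := by
  rw [Measure.map_apply hD.measurable measurableSet_Iic,
    preimage_Iic_of_latent (cumHaz_strictMonoOn hD.continuousOn hD.pos) hD.spec ha,
    ← Measure.map_apply hD.measurable_driver measurableSet_Iic, hD.map_driver,
    expMeasure_one_Iic (cumHaz_nonneg hD.continuousOn hD.pos ha)]

lemma map_Ici (hD : IsLatentTime P lam E D) {a : ℝ} (ha : 0 ≤ a) :
    P.map D (Ici a) = ENNReal.ofReal (Real.exp (-cumHaz lam a)) := by
  rw [Measure.map_apply hD.measurable measurableSet_Ici,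
    preimage_Ici_of_latent (cumHaz_strictMonoOn hD.continuousOn hD.pos) hD.spec ha,
    ← Measure.map_apply hD.measurable_driver measurableSet_Ici, hD.map_driver,
    expMeasure_one_Ici (cumHaz_nonneg hD.continuousOn hD.pos ha)]

lemma map_eq_withDensity [IsFiniteMeasure P] (hD : IsLatentTime P lam E D) :
    P.map D = (volume.restrict (Ici 0)).withDensity
      fun s ↦ ENNReal.ofReal (Real.exp (-cumHaz lam s) * lam s) := by
  refine Measure.ext_of_Iic _ _ fun a ↦ ?_
  rw [withDensity_apply _ measurableSet_Iic, Measure.restrict_restrict measurableSet_Iic,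
    Iic_inter_Ici]
  rcases le_or_gt 0 a with ha | ha
  · rw [hD.map_Iic ha, lintegral_Icc_ofReal_eq_ofReal_integral ha
      (continuousOn_exp_neg_cumHaz_mul hD.continuousOn ha)
      fun x hx ↦ mul_nonneg (Real.exp_pos _).le (hD.pos x hx.1).le,
      integral_exp_neg_cumHaz_mul hD.continuousOn ha]
  · rw [Measure.map_apply hD.measurable measurableSet_Iic,
      preimage_Iic_of_latent_of_neg (fun ω ↦ (hD.spec ω).1) ha, Icc_eq_empty (not_le.2 ha)]
    simp

lemma measure_le_and_le [IsProbabilityMeasure P] {mu : ℝ → ℝ} {E' T : Ω → ℝ}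
    (hD : IsLatentTime P lam E D) (hT : IsLatentTime P mu E' T) (hindep : IndepFun E E' P)
    {t : ℝ} (ht : 0 ≤ t) :
    P {ω | D ω ≤ t ∧ D ω ≤ T ω} =
      ENNReal.ofReal (∫ s in (0:ℝ)..t, Real.exp (-cumHaz lam s - cumHaz mu s) * lam s) := by
  set S : Set (ℝ × ℝ) := {p | p.1 ≤ t ∧ p.1 ≤ p.2}
  have hS : MeasurableSet S := (measurableSet_le measurable_fst measurable_const).inter
    (measurableSet_le measurable_fst measurable_snd)
  have hslice :
      ∀ x, P.map T (Prod.mk x ⁻¹' S) = (Iic t).indicator (fun x ↦ P.map T (Ici x)) x := by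
    intro x
    by_cases hx : x ≤ t
    · simp [S, hx, Ici_def]
    · simp [S, hx]
  have hsurv_meas : Measurable fun x ↦ P.map T (Ici x) :=
    Antitone.measurable fun _ _ hxy ↦ measure_mono (Ici_subset_Ici.2 hxy)
  calc P {ω | D ω ≤ t ∧ D ω ≤ T ω}
      = P.map (fun ω ↦ (D ω, T ω)) S :=
        (Measure.map_apply (hD.measurable.prodMk hT.measurable) hS).symm
    _ = ((P.map D).prod (P.map T)) S := by
        rw [(indepFun_iff_map_prod_eq_prod_map_map hD.measurable.aemeasurable
          hT.measurable.aemeasurable).1 (hD.indepFun hT hindep)]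
    _ = ∫⁻ x in Iic t, P.map T (Ici x) ∂(P.map D) := by
        rw [Measure.prod_apply hS, ← lintegral_indicator measurableSet_Iic]
        exact lintegral_congr fun x ↦ hslice x
    _ = ∫⁻ x in Icc 0 t, ENNReal.ofReal (Real.exp (-cumHaz lam x) * lam x) * P.map T (Ici x) := by
        rw [hD.map_eq_withDensity, restrict_withDensity measurableSet_Iic,
          Measure.restrict_restrict measurableSet_Iic, Iic_inter_Ici]
        exact lintegral_withDensity_eq_lintegral_mul₀
            ((ENNReal.continuous_ofReal.comp_continuousOn
              (continuousOn_exp_neg_cumHaz_mul hD.continuousOn ht)).aemeasurable measurableSet_Icc)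
            hsurv_meas.aemeasurable
    _ = ∫⁻ x in Icc 0 t, ENNReal.ofReal (Real.exp (-cumHaz lam x - cumHaz mu x) * lam x) := by
        refine setLIntegral_congr_fun measurableSet_Icc fun x hx ↦ ?_
        rw [hT.map_Ici hx.1,
          ← ENNReal.ofReal_mul (mul_nonneg (Real.exp_pos _).le (hD.pos x hx.1).le),
          sub_eq_add_neg, Real.exp_add]
        ring_nf
    _ = _ := lintegral_Icc_ofReal_eq_ofReal_integral ht
        (((cumHaz_continuousOn_Icc hD.continuousOn ht).neg.sub
          (cumHaz_continuousOn_Icc hT.continuousOn ht)).rexp.mul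
            (hD.continuousOn.mono Icc_subset_Ici_self))
        fun x hx ↦ mul_nonneg (Real.exp_pos _).le (hD.pos x hx.1).le

end IsLatentTime

theorem latent_terminal_without_intermediate_cif_general
    {Ω : Type*} [MeasurableSpace Ω] (P : Measure Ω) [IsProbabilityMeasure P]
    (lamS lam0 : ℝ → ℝ)
    (hScont : ContinuousOn lamS (Set.Ici 0))
    (h0cont : ContinuousOn lam0 (Set.Ici 0))
    (hSpos : ∀ t ∈ Set.Ici (0:ℝ), 0 < lamS t)
    (h0pos : ∀ t ∈ Set.Ici (0:ℝ), 0 < lam0 t)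
    (E1 E2 E3 : Ω → ℝ)
    (hE1m : Measurable E1) (hE2m : Measurable E2)
    (hindep : iIndepFun ![E1, E2, E3] P)
    (hE1d : P.map E1 = expMeasure 1)
    (hE2d : P.map E2 = expMeasure 1)
    (T1 D0 T2 : Ω → ℝ)
    (hT1 : ∀ ω, 0 ≤ T1 ω ∧ cumHaz lamS (T1 ω) = E1 ω)
    (hD0 : ∀ ω, 0 ≤ D0 ω ∧ cumHaz lam0 (D0 ω) = E2 ω)
    (hT2a : ∀ ω, D0 ω ≤ T1 ω → T2 ω = D0 ω)
    :
    ∀ t : ℝ, 0 ≤ t →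
      P {ω | T2 ω ≤ t ∧ D0 ω ≤ T1 ω} =
        ENNReal.ofReal
          (∫ s in (0:ℝ)..t, Real.exp (-cumHaz lam0 s - cumHaz lamS s) * lam0 s) := by
  intro t ht
  have hD0lat : IsLatentTime P lam0 E2 D0 := ⟨h0cont, h0pos, hE2m, hE2d, hD0⟩
  have hT1lat : IsLatentTime P lamS E1 T1 := ⟨hScont, hSpos, hE1m, hE1d, hT1⟩
  have hindep21 : IndepFun E2 E1 P := by
    simpa using hindep.indepFun (i := 1) (j := 0) (by decide)
  have hevent : {ω | T2 ω ≤ t ∧ D0 ω ≤ T1 ω} = {ω | D0 ω ≤ t ∧ D0 ω ≤ T1 ω} :=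
    Set.ext fun ω ↦ and_congr_left fun h ↦ by rw [hT2a ω h]
  rw [hevent]
  exact hD0lat.measure_le_and_le hT1lat hindep21 ht

/-- cumulative incidence of the terminal event without a preceding
intermediate event: `P(T₂ ≤ t, D₀ ≤ T₁) = ∫₀ᵗ exp(−Λ₀(s)−Λ⋆(s)) λ₀(s) ds`. -/
theorem latent_terminal_without_intermediate_cif
    {Ω : Type*} [MeasurableSpace Ω] (P : Measure Ω) [IsProbabilityMeasure P]
    (lamS lam0 : ℝ → ℝ) (lam1 : ℝ → ℝ → ℝ)
    (hScont : ContinuousOn lamS (Set.Ici 0))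
    (h0cont : ContinuousOn lam0 (Set.Ici 0))
    (h1cont : ContinuousOn (fun p : ℝ × ℝ => lam1 p.1 p.2) {p : ℝ × ℝ | 0 ≤ p.2 ∧ p.2 ≤ p.1})
    (hSpos : ∀ t ∈ Set.Ici (0:ℝ), 0 < lamS t)
    (h0pos : ∀ t ∈ Set.Ici (0:ℝ), 0 < lam0 t)
    (h1nn : ∀ s t : ℝ, 0 ≤ s → s ≤ t → 0 ≤ lam1 t s)
    (hStop : Tendsto (cumHaz lamS) atTop atTop)
    (h0top : Tendsto (cumHaz lam0) atTop atTop)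
    (h1mono : ∀ s : ℝ, 0 ≤ s → StrictMonoOn (fun t => cumHaz1 lam1 t s) (Set.Ici s))
    (h1top : ∀ s : ℝ, 0 ≤ s → Tendsto (fun t => cumHaz1 lam1 t s) atTop atTop)
    (E1 E2 E3 : Ω → ℝ)
    (hE1m : Measurable E1) (hE2m : Measurable E2) (hE3m : Measurable E3)
    (hindep : iIndepFun ![E1, E2, E3] P)
    (hE1d : P.map E1 = expMeasure 1)
    (hE2d : P.map E2 = expMeasure 1)
    (hE3d : P.map E3 = expMeasure 1)
    (T1 D0 T2 : Ω → ℝ)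
    (hT1 : ∀ ω, 0 ≤ T1 ω ∧ cumHaz lamS (T1 ω) = E1 ω)
    (hD0 : ∀ ω, 0 ≤ D0 ω ∧ cumHaz lam0 (D0 ω) = E2 ω)
    (hT2a : ∀ ω, D0 ω ≤ T1 ω → T2 ω = D0 ω)
    (hT2b : ∀ ω, T1 ω < D0 ω → T1 ω ≤ T2 ω ∧ cumHaz1 lam1 (T2 ω) (T1 ω) = E3 ω)
    :
    ∀ t : ℝ, 0 ≤ t →
      P {ω | T2 ω ≤ t ∧ D0 ω ≤ T1 ω} =
        ENNReal.ofReal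
          (∫ s in (0:ℝ)..t, Real.exp (-cumHaz lam0 s - cumHaz lamS s) * lam0 s) :=
  latent_terminal_without_intermediate_cif_general P lamS lam0 hScont h0cont hSpos h0pos E1 E2 E3
    hE1m hE2m hindep hE1d hE2d T1 D0 T2 hT1 hD0 hT2a
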